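/- arXiv:1308.0217 — 6 statements merged into one kernel-verified Lean document; each statement's English description precedes it below -/
import Mathlib

section
/- Let R be a nonnegative measure on Ω, φ : Ω → X a measurable map into a measurable space X, and suppose the pushforward R_φ = φ_*R is σ-finite. Let γ : X → (0,1] be measurable such that the measure γ·R_φ is bounded. Then L¹(R) ⊆ L¹(γ(φ)·R), and for every f ∈ L¹(R) one has E_R(f | φ) = E_{γ(φ)·R}(f | φ) R-almost everywhere. -/
/-!
The density `γ ∘ φ` is `σ(φ)`-measurable, so it can be pulled out of `E_R(· | φ)`: for `A ∈ σ(φ)`,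
`∫_A E_R(f | φ) γ(φ) dR = ∫_A E_R(γ(φ) f | φ) dR = ∫_A γ(φ) f dR`. Hence `E_R(f | φ)` satisfies the
defining identities of `E_{γ(φ)·R}(f | φ)`, and the two agree `γ(φ)·R`-a.e., which is `R`-a.e.
because `γ > 0`. The bound `γ ≤ 1` gives `γ(φ)·R ≤ R`, whence the inclusion of `L¹` spaces.
-/

open MeasureTheory

theorem sigmaFinite_trim_comap {Ω X : Type*} [MeasurableSpace Ω] [MeasurableSpace X]
    {μ : Measure Ω} {φ : Ω → X} (hφ : Measurable φ) [SigmaFinite (μ.map φ)] :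
    SigmaFinite (μ.trim hφ.comap_le) :=
  SigmaFinite.of_map _ (Measurable.of_comap_le le_rfl).aemeasurable
    (by rw [map_trim_comap hφ]; infer_instance)

theorem ae_trim_of_ae_of_measurable {Ω : Type*} {m m0 : MeasurableSpace Ω} (hm : m ≤ m0)
    {μ : Measure Ω} {p : Ω → Prop} (hp : MeasurableSet[m] {ω | p ω}) (h : ∀ᵐ ω ∂μ, p ω) :
    ∀ᵐ ω ∂μ.trim hm, p ω := by
  rw [ae_iff, ← Set.compl_ofPred, trim_measurableSet_eq hm hp.compl]
  exact h

theorem condExp_ae_eq_condExp_withDensity {Ω : Type*} {m m0 : MeasurableSpace Ω} (hm : m ≤ m0)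
    {μ : Measure Ω} [SigmaFinite (μ.trim hm)] {g : Ω → ENNReal} (hg : Measurable[m] g)
    (hg_top : ∀ᵐ ω ∂μ, g ω < ⊤) {f : Ω → ℝ} (hf : Integrable f μ)
    (hf' : Integrable f (μ.withDensity g)) :
    μ[f|m] =ᵐ[μ.withDensity g] (μ.withDensity g)[f|m] := by
  have : SigmaFinite ((μ.withDensity g).trim hm) := by
    rw [trim_withDensity hm hg]
    exact SigmaFinite.withDensity_of_ne_top (ae_trim_of_ae_of_measurable hm
      (hg (measurableSet_singleton ⊤)).compl (hg_top.mono fun _ => ne_of_lt))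
  have hg₀ : Measurable g := hg.mono hm le_rfl
  set b : Ω → ℝ := fun ω => (g ω).toReal
  have hbf : Integrable (b * f) μ := (integrable_withDensity_iff_integrable_smul' hg₀ hg_top).1 hf'
  have hpull : μ[b * f|m] =ᵐ[μ] b * μ[f|m] :=
    condExp_mul_of_stronglyMeasurable_left hg.ennreal_toReal.stronglyMeasurable hbf hf
  have hint : Integrable (μ[f|m]) (μ.withDensity g) :=
    (integrable_withDensity_iff_integrable_smul' hg₀ hg_top).2 (integrable_condExp.congr hpull)
  refine ae_eq_condExp_of_forall_setIntegral_eq hm hf' (fun s _ _ => hint.integrableOn)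
    (fun s hs _ => ?_) stronglyMeasurable_condExp.aestronglyMeasurable
  have hs₀ : MeasurableSet s := hm s hs
  rw [setIntegral_withDensity_eq_setIntegral_toReal_smul hg₀ (ae_restrict_of_ae hg_top) _ hs₀,
    setIntegral_withDensity_eq_setIntegral_toReal_smul hg₀ (ae_restrict_of_ae hg_top) _ hs₀]
  calc ∫ ω in s, b ω * μ[f|m] ω ∂μ = ∫ ω in s, μ[b * f|m] ω ∂μ :=
        setIntegral_congr_ae hs₀ (hpull.mono fun ω h _ => h.symm)
    _ = ∫ ω in s, b ω * f ω ∂μ := setIntegral_condExp hm hbf hs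

theorem withDensity_le_self_of_le_one {Ω : Type*} [MeasurableSpace Ω] {μ : Measure Ω}
    {g : Ω → ENNReal} (hg : g ≤ᵐ[μ] 1) : μ.withDensity g ≤ μ :=
  (withDensity_mono hg).trans_eq withDensity_one

theorem condexp_eq_condexp_withDensity_general
    {Ω X : Type*} [MeasurableSpace Ω] [MeasurableSpace X]
    (R : Measure Ω) (φ : Ω → X) (hφ : Measurable φ) [SigmaFinite (R.map φ)]
    (γ : X → ENNReal) (hγm : Measurable γ) (hγ : ∀ x, 0 < γ x ∧ γ x ≤ 1)
    (f : Ω → ℝ) (hf : Integrable f R) :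
    Integrable f (R.withDensity (γ ∘ φ)) ∧
      R[f | MeasurableSpace.comap φ inferInstance]
        =ᵐ[R] (R.withDensity (γ ∘ φ))[f | MeasurableSpace.comap φ inferInstance] := by
  have := sigmaFinite_trim_comap (μ := R) hφ
  have hf' : Integrable f (R.withDensity (γ ∘ φ)) :=
    hf.mono_measure (withDensity_le_self_of_le_one (ae_of_all _ fun ω => (hγ (φ ω)).2))
  have hac : R ≪ R.withDensity (γ ∘ φ) :=
    withDensity_absolutelyContinuous' (hγm.comp hφ).aemeasurable
      (ae_of_all _ fun ω => (hγ (φ ω)).1.ne')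
  refine ⟨hf', hac.ae_le ?_⟩
  exact condExp_ae_eq_condExp_withDensity hφ.comap_le
    (hγm.comp (Measurable.of_comap_le le_rfl))
    (ae_of_all _ fun ω => (hγ (φ ω)).2.trans_lt ENNReal.one_lt_top) hf hf'

/-- If `R_φ = φ⁎R` is σ-finite and `γ : X → (0,1]` is measurable with `γ·R_φ` a bounded
measure, then `L¹(R) ⊆ L¹(γ(φ)·R)` and for `f ∈ L¹(R)`,
`E_R(f | φ) = E_{γ(φ)·R}(f | φ)` R-a.e. -/
theorem condexp_eq_condexp_withDensity
    {Ω X : Type*} [MeasurableSpace Ω] [MeasurableSpace X]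
    (R : Measure Ω) (φ : Ω → X) (hφ : Measurable φ) [SigmaFinite (R.map φ)]
    (γ : X → ENNReal) (hγm : Measurable γ) (hγ : ∀ x, 0 < γ x ∧ γ x ≤ 1)
    (hbd : IsFiniteMeasure ((R.map φ).withDensity γ))
    (f : Ω → ℝ) (hf : Integrable f R) :
    Integrable f (R.withDensity (γ ∘ φ)) ∧
      R[f | MeasurableSpace.comap φ inferInstance]
        =ᵐ[R] (R.withDensity (γ ∘ φ))[f | MeasurableSpace.comap φ inferInstance] :=
  condexp_eq_condexp_withDensity_general R φ hφ γ hγm hγ f hf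
end

section
/- Let R, Q be nonnegative measures on a measurable space Ω and φ : Ω → X a measurable map into a Polish space X. Suppose Q ≺ R and that both pushforwards R_φ and Q_φ are σ-finite. Then E_R(dQ/dR | φ) > 0 Q-almost everywhere, and for every bounded measurable function f on Ω, E_Q(f | φ) = E_R((dQ/dR)·f | φ) / E_R(dQ/dR | φ), Q-almost everywhere. -/
/-!
Since `γ ∘ φ > 0` `Q`-a.e., `Q ≪ Q' := γ(φ)·Q`, and `Q' = θ·R'` with `R' := γ(φ)·R`, both
finite; so it suffices to treat a change of measure `Q' = θ·R'`. The `σ(φ)`-set where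
`E_{R'}(θ|φ) ≤ 0` has `Q'`-mass `∫ θ dR' = ∫ E_{R'}(θ|φ) dR' ≤ 0`. For `u = E_{Q'}(f|φ)`, the
functions `θu` and `θf` have the same `R'`-integrals over `σ(φ)`-sets, hence
`E_{R'}(θf|φ) = E_{R'}(θu|φ) = u·E_{R'}(θ|φ)`.
-/

open MeasureTheory
open scoped ENNReal

section ChangeOfMeasure

variable {Ω : Type*} {m mΩ : MeasurableSpace Ω} {R : Measure Ω} {θ : Ω → ℝ≥0∞}

lemma ae_lt_top_of_isFiniteMeasure_withDensity (hθ : Measurable θ)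
    [IsFiniteMeasure (R.withDensity θ)] : ∀ᵐ ω ∂ R, θ ω < ∞ :=
  ae_lt_top hθ <| by
    simpa [withDensity_apply _ MeasurableSet.univ] using measure_ne_top (R.withDensity θ) .univ

lemma integrable_toReal_mul_of_integrable_withDensity (hθ : Measurable θ)
    [IsFiniteMeasure (R.withDensity θ)] {h : Ω → ℝ} (hh : Integrable h (R.withDensity θ)) :
    Integrable (fun ω => (θ ω).toReal * h ω) R :=
  (integrable_withDensity_iff_integrable_smul' hθ
    (ae_lt_top_of_isFiniteMeasure_withDensity hθ)).mp hh

lemma integrable_toReal_of_isFiniteMeasure_withDensity (hθ : Measurable θ)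
    [IsFiniteMeasure (R.withDensity θ)] : Integrable (fun ω => (θ ω).toReal) R := by
  simpa using integrable_toReal_mul_of_integrable_withDensity hθ (integrable_const (1 : ℝ))

lemma setIntegral_withDensity_eq_setIntegral_toReal_mul [SFinite R] (hθ : Measurable θ)
    [IsFiniteMeasure (R.withDensity θ)] (h : Ω → ℝ) (s : Set Ω) :
    ∫ ω in s, h ω ∂ R.withDensity θ = ∫ ω in s, (θ ω).toReal * h ω ∂ R :=
  setIntegral_withDensity_eq_setIntegral_toReal_smul' s hθ
    (ae_restrict_of_ae (ae_lt_top_of_isFiniteMeasure_withDensity hθ)) h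

variable (hm : m ≤ mΩ) [SigmaFinite (R.trim hm)]
include hm

lemma ae_withDensity_condExp_toReal_pos (hθ : Measurable θ) [IsFiniteMeasure (R.withDensity θ)] :
    ∀ᵐ ω ∂ R.withDensity θ, 0 < R[fun ω => (θ ω).toReal | m] ω := by
  have : SigmaFinite R := .of_trim hm
  set A := R[fun ω => (θ ω).toReal | m] ⁻¹' Set.Iic 0
  have hA : MeasurableSet[m] A := stronglyMeasurable_condExp.measurable measurableSet_Iic
  have hQA : (R.withDensity θ).real A ≤ 0 := calc
    (R.withDensity θ).real A = ∫ ω in A, (θ ω).toReal ∂ R := by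
      simpa using setIntegral_withDensity_eq_setIntegral_toReal_mul hθ (fun _ => (1 : ℝ)) A
    _ = ∫ ω in A, R[fun ω => (θ ω).toReal | m] ω ∂ R :=
      (setIntegral_condExp hm (integrable_toReal_of_isFiniteMeasure_withDensity hθ) hA).symm
    _ ≤ 0 := setIntegral_nonpos (hm A hA) fun _ hω => hω
  simpa [ae_iff, A, Set.preimage] using
    (measureReal_eq_zero_iff (by finiteness)).mp (le_antisymm hQA measureReal_nonneg)

lemma condExp_toReal_mul_ae_eq_condExp_withDensity_mul (hθ : Measurable θ)
    [IsFiniteMeasure (R.withDensity θ)] {f : Ω → ℝ} (hf : Integrable f (R.withDensity θ)) :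
    R[fun ω => (θ ω).toReal * f ω | m]
      =ᵐ[R] (R.withDensity θ)[f | m] * R[fun ω => (θ ω).toReal | m] := by
  have : SigmaFinite R := .of_trim hm
  set u := (R.withDensity θ)[f | m]
  set ρ : Ω → ℝ := fun ω => (θ ω).toReal
  have hρu : Integrable (fun ω => ρ ω * u ω) R :=
    integrable_toReal_mul_of_integrable_withDensity hθ integrable_condExp
  have hθu : R[fun ω => ρ ω * u ω | m] =ᵐ[R] R[fun ω => ρ ω * f ω | m] :=
    ae_eq_condExp_of_forall_setIntegral_eq hm
      (integrable_toReal_mul_of_integrable_withDensity hθ hf)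
      (fun _ _ _ => integrable_condExp.integrableOn)
      (fun s hs _ => by
        rw [setIntegral_condExp hm hρu hs,
          ← setIntegral_withDensity_eq_setIntegral_toReal_mul hθ,
          ← setIntegral_withDensity_eq_setIntegral_toReal_mul hθ, setIntegral_condExp hm hf hs])
      stronglyMeasurable_condExp.aestronglyMeasurable
  have hcomm : (fun ω => ρ ω * u ω) = u * ρ := funext fun ω => mul_comm _ _
  have hpull : R[fun ω => ρ ω * u ω | m] =ᵐ[R] u * R[ρ | m] := by
    rw [hcomm]
    exact condExp_mul_of_stronglyMeasurable_left stronglyMeasurable_condExp (hcomm ▸ hρu)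
      (integrable_toReal_of_isFiniteMeasure_withDensity hθ)
  exact hθu.symm.trans hpull

lemma condExp_withDensity_ae_eq_div (hθ : Measurable θ) [IsFiniteMeasure (R.withDensity θ)]
    {f : Ω → ℝ} (hf : Integrable f (R.withDensity θ)) :
    (R.withDensity θ)[f | m] =ᵐ[R.withDensity θ] fun ω =>
      R[fun ω => (θ ω).toReal * f ω | m] ω / R[fun ω => (θ ω).toReal | m] ω := by
  filter_upwards [ae_withDensity_condExp_toReal_pos hm hθ,
    withDensity_absolutelyContinuous R θ |>.ae_le
      (condExp_toReal_mul_ae_eq_condExp_withDensity_mul hm hθ hf)] with ω hpos hmul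
  rw [hmul, Pi.mul_apply, mul_div_cancel_right₀ _ hpos.ne']

end ChangeOfMeasure

lemma eq_withDensity_of_forall_lintegral_eq {Ω : Type*} [MeasurableSpace Ω] {Q R : Measure Ω}
    {θ : Ω → ℝ≥0∞}
    (hθ : ∀ f : Ω → ℝ≥0∞, Measurable f → ∫⁻ ω, f ω ∂ Q = ∫⁻ ω, f ω * θ ω ∂ R) :
    Q = R.withDensity θ := by
  ext s hs
  rw [withDensity_apply _ hs, ← lintegral_indicator_one hs, hθ _ (measurable_one.indicator hs),
    ← lintegral_indicator hs]
  congr 1 with ω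
  by_cases hω : ω ∈ s <;> simp [hω]

theorem condexp_abs_continuous_formula_general
    {Ω X : Type*} [MeasurableSpace Ω] [MeasurableSpace X]
    (R Q : Measure Ω) (φ : Ω → X) (hφ : Measurable φ)
    (θ : Ω → ENNReal) (hθm : Measurable θ)
    (hθ : ∀ f : Ω → ENNReal, Measurable f → ∫⁻ ω, f ω ∂Q = ∫⁻ ω, f ω * θ ω ∂ R)
    (γ : X → ENNReal) (hγm : Measurable γ)
    (hγpos : ∀ᵐ x ∂(R.map φ + Q.map φ), 0 < γ x ∧ γ x ≤ 1)
    (hRγ : IsFiniteMeasure (R.withDensity (γ ∘ φ)))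
    (hQγ : IsFiniteMeasure (Q.withDensity (γ ∘ φ))) :
    (∀ᵐ ω ∂Q,
      0 < ((R.withDensity (γ ∘ φ))[fun ω' => (θ ω').toReal |
            MeasurableSpace.comap φ inferInstance]) ω) ∧
    ∀ f : Ω → ℝ, Measurable f → (∃ C : ℝ, ∀ ω, |f ω| ≤ C) →
      (Q.withDensity (γ ∘ φ))[f | MeasurableSpace.comap φ inferInstance]
        =ᵐ[Q] fun ω =>
          ((R.withDensity (γ ∘ φ))[fun ω' => (θ ω').toReal * f ω' |
              MeasurableSpace.comap φ inferInstance]) ω /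
          ((R.withDensity (γ ∘ φ))[fun ω' => (θ ω').toReal |
              MeasurableSpace.comap φ inferInstance]) ω := by
  have hγφ : Measurable (γ ∘ φ) := hγm.comp hφ
  have hQγ_eq : Q.withDensity (γ ∘ φ) = (R.withDensity (γ ∘ φ)).withDensity θ := by
    rw [eq_withDensity_of_forall_lintegral_eq hθ, ← withDensity_mul _ hθm hγφ, mul_comm,
      withDensity_mul _ hγφ hθm]
  have hQ_ac : Q ≪ Q.withDensity (γ ∘ φ) := by
    refine withDensity_absolutelyContinuous' hγφ.aemeasurable ?_
    filter_upwards [ae_of_ae_map hφ.aemeasurable (ae_add_measure_iff.mp hγpos).2] with ω hω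
    exact hω.1.ne'
  rw [hQγ_eq] at hQγ hQ_ac ⊢
  refine ⟨hQ_ac.ae_le (ae_withDensity_condExp_toReal_pos hφ.comap_le hθm),
    fun f hf ⟨C, hC⟩ => hQ_ac.ae_le (condExp_withDensity_ae_eq_div hφ.comap_le hθm ?_)⟩
  exact .of_bound hf.aestronglyMeasurable C (ae_of_all _ hC)

/-- Theorem (Léonard, Thm 2.5 (d)). Let `Q ≺ R` with density `θ = dQ/dR`, `φ : Ω → X`
measurable into a Polish space, with `R_φ` and `Q_φ` σ-finite, and let `γ : X → (0,1]`
(a.e.) be measurable making `γ(φ)·R` and `γ(φ)·Q` bounded, so that the extended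
conditional expectations are `E_R(·|φ) := E_{γ(φ)R}(·|φ)` and `E_Q(·|φ) := E_{γ(φ)Q}(·|φ)`.
Then `E_R(dQ/dR | φ) > 0` Q-a.e. and, for every bounded measurable `f`,
`E_Q(f|φ) = E_R((dQ/dR)·f | φ) / E_R(dQ/dR | φ)` Q-a.e. -/
theorem condexp_abs_continuous_formula
    {Ω X : Type*} [MeasurableSpace Ω] [MeasurableSpace X]
    [TopologicalSpace X] [PolishSpace X] [BorelSpace X]
    (R Q : Measure Ω) (φ : Ω → X) (hφ : Measurable φ)
    (θ : Ω → ENNReal) (hθm : Measurable θ) (hθfin : ∀ ω, θ ω ≠ ⊤)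
    (hθ : ∀ f : Ω → ENNReal, Measurable f → ∫⁻ ω, f ω ∂Q = ∫⁻ ω, f ω * θ ω ∂ R)
    [SigmaFinite (R.map φ)] [SigmaFinite (Q.map φ)]
    (γ : X → ENNReal) (hγm : Measurable γ)
    (hγpos : ∀ᵐ x ∂(R.map φ + Q.map φ), 0 < γ x ∧ γ x ≤ 1)
    (hRγ : IsFiniteMeasure (R.withDensity (γ ∘ φ)))
    (hQγ : IsFiniteMeasure (Q.withDensity (γ ∘ φ))) :
    (∀ᵐ ω ∂Q,
      0 < ((R.withDensity (γ ∘ φ))[fun ω' => (θ ω').toReal |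
            MeasurableSpace.comap φ inferInstance]) ω) ∧
    ∀ f : Ω → ℝ, Measurable f → (∃ C : ℝ, ∀ ω, |f ω| ≤ C) →
      (Q.withDensity (γ ∘ φ))[f | MeasurableSpace.comap φ inferInstance]
        =ᵐ[Q] fun ω =>
          ((R.withDensity (γ ∘ φ))[fun ω' => (θ ω').toReal * f ω' |
              MeasurableSpace.comap φ inferInstance]) ω /
          ((R.withDensity (γ ∘ φ))[fun ω' => (θ ω').toReal |
              MeasurableSpace.comap φ inferInstance]) ω :=
  condexp_abs_continuous_formula_general R Q φ hφ θ hθm hθ γ hγm hγpos hRγ hQγ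
end

section
/- Let R be a σ-finite nonnegative measure on Ω and P a probability measure on Ω. Let W, W' : Ω → [0,∞) be measurable functions with z_W := ∫ e^{−W} dR < ∞ and z_{W'} := ∫ e^{−W'} dR < ∞, and suppose ∫ W dP < ∞ and ∫ W' dP < ∞. Then H(P | R_W) − ∫ W dP − log z_W = H(P | R_{W'}) − ∫ W' dP − log z_{W'} in (−∞,∞], where R_W := z_W^{−1} e^{−W}·R and R_{W'} := z_{W'}^{−1} e^{−W'}·R are the associated probability measures. -/
/-! Both sides equal `relEnt P R = ∫ log (dP/dR) dP`, computed directly against the unbounded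
measure: `P`-a.e. one has `log (dP/dR_W) = W + log z_W + log (dP/dR)`, so as `W` is `P`-integrable
the two log-likelihood ratios are integrable together, and the terms `∫ W dP + log z_W` cancel. -/

open MeasureTheory
open scoped Classical

/-- Relative entropy `H(P|S) = ∫ log(dP/dS) dP ∈ (-∞,∞]` between (probability) measures,
`+∞` if `P` is not absolutely continuous w.r.t. `S` or `log(dP/dS)` is not `P`-integrable. -/
noncomputable def relEnt {Ω : Type*} [MeasurableSpace Ω] (P S : Measure Ω) : EReal :=
  if P ≪ S ∧ Integrable (llr P S) P then ((∫ ω, llr P S ω ∂P : ℝ) : EReal) else ⊤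

/-- The normalizing constant `z_W = ∫ e^{-W} dR`. -/
noncomputable def zW {Ω : Type*} [MeasurableSpace Ω] (R : Measure Ω) (W : Ω → ℝ) : ENNReal :=
  lintegral R (fun ω => ENNReal.ofReal (Real.exp (-W ω)))

/-- The tilted probability measure `R_W = z_W⁻¹ e^{-W}·R`. -/
noncomputable def tiltedPM {Ω : Type*} [MeasurableSpace Ω] (R : Measure Ω) (W : Ω → ℝ) :
    Measure Ω :=
  (zW R W)⁻¹ • R.withDensity (fun ω => ENNReal.ofReal (Real.exp (-W ω)))

/-- Relative entropy with respect to a possibly unbounded (σ-finite) reference measure `R`,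
defined through the tilting function `W` by `H(P|R) := H(P|R_W) - ∫ W dP - log z_W`. -/
noncomputable def relEntSF {Ω : Type*} [MeasurableSpace Ω] (R : Measure Ω) (W : Ω → ℝ)
    (P : Measure Ω) : EReal :=
  relEnt P (tiltedPM R W) - ((∫ ω, W ω ∂P : ℝ) : EReal)
    - ((Real.log (zW R W).toReal : ℝ) : EReal)

open Real

section Tilted

variable {Ω : Type*} [MeasurableSpace Ω] {P R : Measure Ω} {f : Ω → ℝ}

lemma relEnt_of_not_absolutelyContinuous {S : Measure Ω} (h : ¬ P ≪ S) : relEnt P S = ⊤ :=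
  if_neg fun h' ↦ h h'.1

lemma integrable_llr_tilted_right_iff [IsFiniteMeasure P] [SigmaFinite R] (hPR : P ≪ R)
    (hfP : Integrable f P) (hfR : Integrable (fun x ↦ exp (f x)) R) :
    Integrable (llr P (R.tilted f)) P ↔ Integrable (llr P R) P := by
  refine ⟨fun h ↦ ?_, fun h ↦ integrable_llr_tilted_right hPR hfP h hfR⟩
  have hllr : llr P R =ᵐ[P] fun x ↦ llr P (R.tilted f) x + f x - log (∫ z, exp (f z) ∂ R) := by
    filter_upwards [llr_tilted_right hPR hfR] with x hx
    rw [hx]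
    ring
  exact (integrable_congr hllr).mpr ((h.add hfP).sub (integrable_const _))

lemma relEnt_tilted_right [IsProbabilityMeasure P] [SigmaFinite R] (hPR : P ≪ R)
    (hfP : Integrable f P) (hfR : Integrable (fun x ↦ exp (f x)) R) :
    relEnt P (R.tilted f) = relEnt P R - ∫ x, f x ∂P + log (∫ x, exp (f x) ∂ R) := by
  have hPS : P ≪ R.tilted f := hPR.trans (absolutelyContinuous_tilted hfR)
  by_cases hint : Integrable (llr P R) P
  · rw [relEnt, relEnt, if_pos ⟨hPS, (integrable_llr_tilted_right_iff hPR hfP hfR).2 hint⟩,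
      if_pos ⟨hPR, hint⟩, integral_llr_tilted_right hPR hfP hfR hint]
    norm_cast
  · rw [relEnt, relEnt, if_neg fun h ↦ hint ((integrable_llr_tilted_right_iff hPR hfP hfR).1 h.2),
      if_neg fun h ↦ hint h.2]
    simp

end Tilted

section TiltedPM

variable {Ω : Type*} [MeasurableSpace Ω] {R : Measure Ω} {W : Ω → ℝ}

lemma zW_toReal_eq_integral (hWm : Measurable W) : (zW R W).toReal = ∫ ω, exp (-W ω) ∂ R := by
  rw [integral_eq_lintegral_of_nonneg_ae (f := fun ω ↦ exp (-W ω))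
    (.of_forall fun _ ↦ (exp_pos _).le) (by fun_prop)]
  rfl

lemma integrable_exp_neg_of_zW_ne_top (hWm : Measurable W) (hzW : zW R W ≠ ⊤) :
    Integrable (fun ω ↦ exp (-W ω)) R :=
  ⟨hWm.neg.exp.aestronglyMeasurable,
    (hasFiniteIntegral_iff_ofReal (.of_forall fun _ ↦ (exp_pos _).le)).2 hzW.lt_top⟩

lemma tiltedPM_eq_tilted [NeZero R] (hWm : Measurable W) (hzW : zW R W ≠ ⊤) :
    tiltedPM R W = R.tilted (fun ω ↦ -W ω) := by
  have hz : 0 < (zW R W).toReal := by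
    rw [zW_toReal_eq_integral hWm]
    exact integral_exp_pos (integrable_exp_neg_of_zW_ne_top hWm hzW)
  have hdensity : (fun ω ↦ ENNReal.ofReal (exp (-W ω) / ∫ z, exp (-W z) ∂ R))
      = (zW R W)⁻¹ • fun ω ↦ ENNReal.ofReal (exp (-W ω)) := by
    funext ω
    rw [← zW_toReal_eq_integral hWm, div_eq_inv_mul, ENNReal.ofReal_mul (inv_nonneg.2 hz.le),
      ENNReal.ofReal_inv_of_pos hz, ENNReal.ofReal_toReal hzW, Pi.smul_apply, smul_eq_mul]
  rw [tiltedPM, Measure.tilted, hdensity, withDensity_smul _ (by fun_prop)]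

lemma tiltedPM_absolutelyContinuous : tiltedPM R W ≪ R :=
  Measure.smul_absolutelyContinuous.trans (withDensity_absolutelyContinuous _ _)

theorem relEntSF_eq_relEnt [SigmaFinite R] {P : Measure Ω} [IsProbabilityMeasure P]
    (hWm : Measurable W) (hzW : zW R W ≠ ⊤) (hWP : Integrable W P) :
    relEntSF R W P = relEnt P R := by
  by_cases hPR : P ≪ R
  · have : NeZero R := ⟨fun h ↦ IsProbabilityMeasure.ne_zero P
      (Measure.absolutelyContinuous_zero_iff.1 (h ▸ hPR))⟩
    rw [relEntSF, tiltedPM_eq_tilted hWm hzW,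
      relEnt_tilted_right (f := fun ω ↦ -W ω) hPR hWP.neg
        (integrable_exp_neg_of_zW_ne_top hWm hzW),
      zW_toReal_eq_integral hWm, integral_neg]
    induction relEnt P R using EReal.rec with
    | coe x => norm_cast; ring
    | bot | top => simp
  · rw [relEntSF, relEnt_of_not_absolutelyContinuous hPR,
      relEnt_of_not_absolutelyContinuous fun h ↦ hPR (h.trans tiltedPM_absolutelyContinuous)]
    simp

end TiltedPM

theorem relEntSF_coherent_general
    {Ω : Type*} [MeasurableSpace Ω] (R : Measure Ω) [SigmaFinite R]
    (P : Measure Ω) [IsProbabilityMeasure P]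
    (W W' : Ω → ℝ) (hWm : Measurable W) (hW'm : Measurable W')
    (hzW : zW R W ≠ ⊤) (hzW' : zW R W' ≠ ⊤)
    (hWP : Integrable W P) (hW'P : Integrable W' P) :
    relEntSF R W P = relEntSF R W' P := by
  rw [relEntSF_eq_relEnt hWm hzW hWP, relEntSF_eq_relEnt hW'm hzW' hW'P]

/-- Coherence of the definition of relative entropy with respect to an unbounded measure:
the value `H(P|R_W) - ∫ W dP - log z_W` does not depend on the choice of the tilting
function `W`. -/
theorem relEntSF_coherent
    {Ω : Type*} [MeasurableSpace Ω] (R : Measure Ω) [SigmaFinite R]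
    (P : Measure Ω) [IsProbabilityMeasure P]
    (W W' : Ω → ℝ) (hWm : Measurable W) (hW'm : Measurable W')
    (hW0 : ∀ ω, 0 ≤ W ω) (hW'0 : ∀ ω, 0 ≤ W' ω)
    (hzW : zW R W ≠ ⊤) (hzW' : zW R W' ≠ ⊤)
    (hWP : Integrable W P) (hW'P : Integrable W' P) :
    relEntSF R W P = relEntSF R W' P :=
  relEntSF_coherent_general R P W W' hWm hW'm hzW hzW' hWP hW'P
end

section
/- Let R be a σ-finite nonnegative measure on Ω and W : Ω → [0,∞) measurable with ∫ e^{−W} dR < ∞. Then for every probability measure P on Ω with ∫ W dP < ∞, H(P|R) = sup{ ∫ u dP − log ∫ e^u dR : u measurable with sup_Ω |u|/(1+W) < ∞ }. -/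
open MeasureTheory
open scoped Classical

/-!
Tilting reduces the claim to the Donsker–Varadhan formula for the probability measures `P` and
`R_W`: the substitution `v = u + W` is a bijection of `B_W(Ω)`, and
`∫ e^v dR_W = z_W⁻¹ ∫ e^u dR`, so the objective `∫ u dP - log ∫ e^u dR` equals the objective
for `R_W` at `v` minus `∫ W dP + log z_W`.

For probability measures `P, Q`, Gibbs' inequality against the tilted measure
`e^v Q / ∫ e^v dQ` gives `∫ v dP - log ∫ e^v dQ ≤ H(P|Q)`. Conversely, if `P ≪ Q` the
log-likelihood ratio clamped to `[-n, n]` nearly attains `H(P|Q)`: its negative part is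
integrable and its positive part converges monotonically. If `P` is not absolutely continuous,
large multiples of the indicator of a `Q`-null set of positive `P`-measure make the supremum
infinite.
-/

lemma EReal.Tendsto.sub_coe {ι : Type*} {l : Filter ι} {x : ι → EReal} {b : ι → ℝ} {X : EReal}
    {B : ℝ} (hx : Filter.Tendsto x l (nhds X)) (hb : Filter.Tendsto b l (nhds B)) :
    Filter.Tendsto (fun i ↦ x i - b i) l (nhds (X - B)) := by
  simpa only [sub_eq_add_neg, ← EReal.coe_neg, Function.comp_def] using
    (EReal.continuousAt_add (p := (X, ((-B : ℝ) : EReal))) (.inr (EReal.coe_ne_bot _))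
      (.inr (EReal.coe_ne_top _))).tendsto.comp (hx.prodMk_nhds (EReal.tendsto_coe.2 hb.neg))

lemma EReal.sSup_image_add_coe (T : Set EReal) (c : ℝ) :
    sSup ((· + (c : EReal)) '' T) = sSup T + c :=
  (Monotone.map_sSup_of_continuousAt (f := (· + (c : EReal)))
    ((EReal.continuousAt_add (p := (sSup T, c)) (.inr (EReal.coe_ne_bot c))
      (.inr (EReal.coe_ne_top c))).comp (f := fun x ↦ (x, (c : EReal)))
        (continuousAt_id.prodMk continuousAt_const))
    (fun _ _ h ↦ add_le_add_left h _) (EReal.bot_add _)).symm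

namespace MeasureTheory

open Real InformationTheory Filter Topology
open scoped ENNReal

variable {Ω : Type*} [MeasurableSpace Ω]

lemma integrable_of_lintegral_ofReal_ne_top {μ : Measure Ω} {f : Ω → ℝ}
    (hf : AEStronglyMeasurable f μ) (h_pos : ∫⁻ ω, ENNReal.ofReal (f ω) ∂μ ≠ ⊤)
    (h_neg : ∫⁻ ω, ENNReal.ofReal (-f ω) ∂μ ≠ ⊤) : Integrable f μ := by
  refine ⟨hf, ?_⟩
  have h_le : ∀ ω, ‖f ω‖ₑ ≤ ENNReal.ofReal (f ω) + ENNReal.ofReal (-f ω) := fun ω ↦ by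
    rw [Real.enorm_eq_ofReal_abs]
    rcases abs_cases (f ω) with ⟨h, -⟩ | ⟨h, -⟩ <;> rw [h]
    exacts [le_self_add, le_add_self]
  calc ∫⁻ ω, ‖f ω‖ₑ ∂μ
      ≤ ∫⁻ ω, ENNReal.ofReal (f ω) + ENNReal.ofReal (-f ω) ∂μ := lintegral_mono h_le
    _ = ∫⁻ ω, ENNReal.ofReal (f ω) ∂μ + ∫⁻ ω, ENNReal.ofReal (-f ω) ∂μ :=
        lintegral_add_left' hf.aemeasurable.ennreal_ofReal _
    _ < ⊤ := ENNReal.add_lt_top.2 ⟨h_pos.lt_top, h_neg.lt_top⟩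

lemma lintegral_ofReal_exp_ne_zero {μ : Measure Ω} [NeZero μ] {f : Ω → ℝ}
    (hf : AEMeasurable f μ) : ∫⁻ ω, ENNReal.ofReal (exp (f ω)) ∂μ ≠ 0 := by
  rw [Ne, lintegral_eq_zero_iff' hf.exp.ennreal_ofReal]
  intro h
  refine NeZero.ne μ (ae_eq_bot.1 (eventually_false_iff_eq_bot.1 ?_))
  filter_upwards [h] with ω hω
  exact (exp_pos (f ω)).not_ge (by simpa using hω)

lemma log_lintegral_ofReal_exp {Q : Measure Ω} {v : Ω → ℝ} [NeZero Q]
    (hv : Integrable (fun ω ↦ exp (v ω)) Q) :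
    ENNReal.log (∫⁻ ω, ENNReal.ofReal (exp (v ω)) ∂Q) = Real.log (∫ ω, exp (v ω) ∂Q) := by
  rw [← ofReal_integral_eq_lintegral_ofReal hv (ae_of_all _ fun _ ↦ (exp_pos _).le),
    ENNReal.log_ofReal_of_pos (integral_exp_pos hv)]

noncomputable def dvObjective (P Q : Measure Ω) (v : Ω → ℝ) : EReal :=
  ((∫ ω, v ω ∂P : ℝ) : EReal) - ENNReal.log (∫⁻ ω, ENNReal.ofReal (exp (v ω)) ∂Q)

lemma dvObjective_zero_measure (P : Measure Ω) (v : Ω → ℝ) : dvObjective P 0 v = ⊤ := by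
  simp [dvObjective]

/-- Gibbs' inequality for `P` against the tilted measure `Q.tilted v`. -/
lemma dvObjective_le_relEnt (P Q : Measure Ω) [IsProbabilityMeasure P] [IsProbabilityMeasure Q]
    {v : Ω → ℝ} (hv : Measurable v) (hvP : Integrable v P) :
    dvObjective P Q v ≤ relEnt P Q := by
  unfold relEnt
  split_ifs with h
  swap; · exact le_top
  obtain ⟨hPQ, h_int⟩ := h
  by_cases hexp : Integrable (fun ω ↦ exp (v ω)) Q
  swap
  · have : ∫⁻ ω, ENNReal.ofReal (exp (v ω)) ∂Q = ⊤ := by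
      contrapose! hexp
      exact ⟨hv.exp.aestronglyMeasurable, by
        rwa [hasFiniteIntegral_iff_ofReal (ae_of_all _ fun _ ↦ (exp_pos _).le), lt_top_iff_ne_top]⟩
    simp [dvObjective, this]
  have := isProbabilityMeasure_tilted hexp
  have hPQ' : P ≪ Q.tilted v := hPQ.trans (absolutelyContinuous_tilted hexp)
  have hgibbs := integral_llr_add_sub_measure_univ_nonneg hPQ'
    (integrable_llr_tilted_right hPQ hvP h_int hexp)
  rw [integral_llr_tilted_right hPQ hvP hexp h_int] at hgibbs
  simp only [probReal_univ, add_sub_cancel_right] at hgibbs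
  rw [dvObjective, log_lintegral_ofReal_exp hexp, ← EReal.coe_sub, EReal.coe_le_coe_iff]
  linarith

/-- Since `-x ≤ exp (-x)`, the negative part of `llr P Q` is dominated by `dQ/dP`. -/
lemma lintegral_ofReal_neg_llr_le {P Q : Measure Ω} [SigmaFinite P] [SigmaFinite Q]
    (hPQ : P ≪ Q) : ∫⁻ ω, ENNReal.ofReal (-llr P Q ω) ∂P ≤ Q Set.univ :=
  calc ∫⁻ ω, ENNReal.ofReal (-llr P Q ω) ∂P
      ≤ ∫⁻ ω, ENNReal.ofReal (exp (-llr P Q ω)) ∂P :=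
        lintegral_mono fun _ ↦ ENNReal.ofReal_le_ofReal
          ((le_add_of_nonneg_right zero_le_one).trans (add_one_le_exp _))
    _ = ∫⁻ ω, ENNReal.ofReal (Q.rnDeriv P ω).toReal ∂P :=
        lintegral_congr_ae ((exp_neg_llr hPQ).mono fun _ h ↦ congrArg ENNReal.ofReal h)
    _ ≤ ∫⁻ ω, Q.rnDeriv P ω ∂P := lintegral_mono fun _ ↦ ENNReal.ofReal_toReal_le
    _ ≤ Q Set.univ := Measure.lintegral_rnDeriv_le

lemma relEnt_eq_lintegral_sub_lintegral {P Q : Measure Ω} [IsFiniteMeasure P]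
    [IsFiniteMeasure Q] (hPQ : P ≪ Q) :
    relEnt P Q = (∫⁻ ω, ENNReal.ofReal (llr P Q ω) ∂P : EReal)
      - (∫⁻ ω, ENNReal.ofReal (-llr P Q ω) ∂P : EReal) := by
  have h_neg : ∫⁻ ω, ENNReal.ofReal (-llr P Q ω) ∂P ≠ ⊤ :=
    ((lintegral_ofReal_neg_llr_le hPQ).trans_lt (measure_lt_top Q _)).ne
  unfold relEnt
  split_ifs with h
  · rw [integral_eq_lintegral_pos_part_sub_lintegral_neg_part h.2, EReal.coe_sub,
      EReal.coe_ennreal_toReal h_neg, EReal.coe_ennreal_toReal h.2.lintegral_lt_top.ne]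
  · have h_pos : ∫⁻ ω, ENNReal.ofReal (llr P Q ω) ∂P = ⊤ := by
      contrapose! h
      exact ⟨hPQ, integrable_of_lintegral_ofReal_ne_top
        (measurable_llr P Q).aestronglyMeasurable h h_neg⟩
    rw [h_pos, EReal.coe_ennreal_top, ← EReal.coe_ennreal_toReal h_neg, EReal.top_sub_coe]

lemma tendsto_lintegral_ofReal_min_llr (P Q : Measure Ω) :
    Tendsto (fun n : ℕ ↦ ∫⁻ ω, ENNReal.ofReal (min (llr P Q ω) n) ∂P) atTop
      (𝓝 (∫⁻ ω, ENNReal.ofReal (llr P Q ω) ∂P)) := by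
  refine lintegral_tendsto_of_tendsto_of_monotone
    (fun n ↦ ((measurable_llr P Q).min measurable_const).ennreal_ofReal.aemeasurable)
    (ae_of_all _ fun ω m n hmn ↦
      ENNReal.ofReal_le_ofReal (min_le_min_left _ (Nat.cast_le.2 hmn : (m : ℝ) ≤ n)))
    (ae_of_all _ fun ω ↦ ?_)
  obtain ⟨N, hN⟩ := exists_nat_ge (llr P Q ω)
  exact tendsto_atTop_of_eventually_const fun n hn ↦
    congrArg ENNReal.ofReal (min_eq_left (hN.trans (by exact_mod_cast hn)))

/-- The log-likelihood ratio clamped to `[-n, n]`. Where `dP/dQ` vanishes it is `-n` rather than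
`log 0 = 0`, so that `exp (truncLlr P Q n) ≤ dP/dQ + exp (-n)` everywhere. -/
noncomputable def truncLlr (P Q : Measure Ω) (n : ℕ) (ω : Ω) : ℝ :=
  if 0 < P.rnDeriv Q ω then max (min (llr P Q ω) n) (-n) else -n

lemma measurable_truncLlr (P Q : Measure Ω) (n : ℕ) : Measurable (truncLlr P Q n) :=
  Measurable.ite (measurableSet_lt measurable_const (Measure.measurable_rnDeriv P Q))
    (((measurable_llr P Q).min measurable_const).max measurable_const) measurable_const

lemma abs_truncLlr_le (P Q : Measure Ω) (n : ℕ) (ω : Ω) : |truncLlr P Q n ω| ≤ n := by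
  unfold truncLlr
  split_ifs
  · exact abs_le.2 ⟨le_max_right _ _, max_le (min_le_right _ _) (by simp)⟩
  · simp

lemma integrable_truncLlr (P Q : Measure Ω) [IsFiniteMeasure P] (n : ℕ) :
    Integrable (truncLlr P Q n) P :=
  (integrable_const (n : ℝ)).mono' (measurable_truncLlr P Q n).aestronglyMeasurable
    (ae_of_all _ (abs_truncLlr_le P Q n))

lemma lintegral_exp_truncLlr_le (P Q : Measure Ω) [IsFiniteMeasure P] (n : ℕ) :
    ∫⁻ ω, ENNReal.ofReal (exp (truncLlr P Q n ω)) ∂Q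
      ≤ P Set.univ + ENNReal.ofReal (exp (-n)) * Q Set.univ := by
  have h_pt : ∀ᵐ ω ∂Q, ENNReal.ofReal (exp (truncLlr P Q n ω))
      ≤ P.rnDeriv Q ω + ENNReal.ofReal (exp (-n)) := by
    filter_upwards [Measure.rnDeriv_lt_top P Q] with ω h_lt
    unfold truncLlr
    split_ifs with h_pos
    · have h_exp : exp (llr P Q ω) = (P.rnDeriv Q ω).toReal :=
        exp_log (ENNReal.toReal_pos h_pos.ne' h_lt.ne)
      calc ENNReal.ofReal (exp (max (min (llr P Q ω) n) (-n)))
          ≤ ENNReal.ofReal (exp (llr P Q ω) + exp (-n)) := by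
            gcongr
            rw [exp_monotone.map_max]
            exact max_le (le_add_of_le_of_nonneg (by gcongr; exact min_le_left _ _)
              (exp_pos _).le) (le_add_of_nonneg_left (exp_pos _).le)
        _ ≤ P.rnDeriv Q ω + ENNReal.ofReal (exp (-n)) := by
            rw [ENNReal.ofReal_add (exp_pos _).le (exp_pos _).le, h_exp,
              ENNReal.ofReal_toReal h_lt.ne]
    · exact le_add_self
  calc ∫⁻ ω, ENNReal.ofReal (exp (truncLlr P Q n ω)) ∂Q
      ≤ ∫⁻ ω, P.rnDeriv Q ω + ENNReal.ofReal (exp (-n)) ∂Q := lintegral_mono_ae h_pt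
    _ ≤ P Set.univ + ENNReal.ofReal (exp (-n)) * Q Set.univ := by
      rw [lintegral_add_right _ measurable_const, lintegral_const]
      gcongr
      exact Measure.lintegral_rnDeriv_le

lemma sub_log_le_dvObjective_truncLlr (P Q : Measure Ω) [IsProbabilityMeasure P]
    [IsProbabilityMeasure Q] (n : ℕ) :
    ((∫ ω, truncLlr P Q n ω ∂P : ℝ) : EReal) - Real.log (1 + exp (-n))
      ≤ dvObjective P Q (truncLlr P Q n) := by
  have h_lint := lintegral_exp_truncLlr_le P Q n
  rw [measure_univ, measure_univ, mul_one, ← ENNReal.ofReal_one,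
    ← ENNReal.ofReal_add zero_le_one (exp_pos _).le] at h_lint
  rw [dvObjective, ← ENNReal.log_ofReal_of_pos (by positivity)]
  exact EReal.sub_le_sub le_rfl (ENNReal.log_monotone h_lint)

lemma lintegral_sub_lintegral_le_integral_truncLlr {P Q : Measure Ω} [IsFiniteMeasure P]
    [IsFiniteMeasure Q] (hPQ : P ≪ Q) (n : ℕ) :
    (∫⁻ ω, ENNReal.ofReal (min (llr P Q ω) n) ∂P : EReal)
        - (∫⁻ ω, ENNReal.ofReal (-llr P Q ω) ∂P : EReal)
      ≤ ((∫ ω, truncLlr P Q n ω ∂P : ℝ) : EReal) := by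
  have h_int := integrable_truncLlr P Q n
  have h_neg : ∫⁻ ω, ENNReal.ofReal (-truncLlr P Q n ω) ∂P ≠ ⊤ := h_int.neg.lintegral_lt_top.ne
  rw [integral_eq_lintegral_pos_part_sub_lintegral_neg_part h_int, EReal.coe_sub,
    EReal.coe_ennreal_toReal h_int.lintegral_lt_top.ne,
    EReal.coe_ennreal_toReal h_neg]
  refine EReal.sub_le_sub (EReal.coe_ennreal_le_coe_ennreal_iff.2 (lintegral_mono_ae ?_))
    (EReal.coe_ennreal_le_coe_ennreal_iff.2 (lintegral_mono_ae ?_))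
  all_goals
    filter_upwards [Measure.rnDeriv_pos hPQ] with ω h_pos
    simp only [truncLlr, if_pos h_pos]
  · exact ENNReal.ofReal_le_ofReal (le_max_left _ _)
  · rw [ENNReal.ofReal_le_ofReal_iff', neg_le_neg_iff, neg_nonpos]
    rcases le_total (llr P Q ω) n with h | h
    · exact .inl (le_max_of_le_left (le_min le_rfl h))
    · exact .inr (le_max_of_le_left (le_min (n.cast_nonneg.trans h) n.cast_nonneg))

lemma dvObjective_indicator_of_measure_eq_zero (P : Measure Ω) {Q : Measure Ω}
    [IsProbabilityMeasure Q] {A : Set Ω} (hA : MeasurableSet A) (hQA : Q A = 0) (c : ℝ) :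
    dvObjective P Q (A.indicator fun _ ↦ c) = ((c * P.real A : ℝ) : EReal) := by
  have h_exp : ∀ᵐ ω ∂Q, ENNReal.ofReal (exp (A.indicator (fun _ ↦ c) ω)) = 1 := by
    filter_upwards [measure_eq_zero_iff_ae_notMem.1 hQA] with ω hω
    simp [Set.indicator_of_notMem hω]
  rw [dvObjective, integral_indicator_const _ hA, lintegral_congr_ae h_exp]
  simp [mul_comm]

section LowerBound

variable {P Q : Measure Ω} [IsProbabilityMeasure P] [IsProbabilityMeasure Q] {𝒱 : Set (Ω → ℝ)}

lemma relEnt_le_sSup_dvObjective_of_ac (hPQ : P ≪ Q)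
    (h_bdd : ∀ v : Ω → ℝ, Measurable v → (∃ C, ∀ ω, |v ω| ≤ C) → v ∈ 𝒱) :
    relEnt P Q ≤ sSup (dvObjective P Q '' 𝒱) := by
  set N := ∫⁻ ω, ENNReal.ofReal (-llr P Q ω) ∂P
  have hN : (N : EReal) = (N.toReal : EReal) :=
    (EReal.coe_ennreal_toReal ((lintegral_ofReal_neg_llr_le hPQ).trans_lt
      (measure_lt_top Q _)).ne).symm
  have h_le (n : ℕ) : (∫⁻ ω, ENNReal.ofReal (min (llr P Q ω) n) ∂P : EReal) - N.toReal
      - Real.log (1 + exp (-n)) ≤ sSup (dvObjective P Q '' 𝒱) :=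
    calc _ ≤ ((∫ ω, truncLlr P Q n ω ∂P : ℝ) : EReal) - Real.log (1 + exp (-n)) :=
          EReal.sub_le_sub (hN ▸ lintegral_sub_lintegral_le_integral_truncLlr hPQ n) le_rfl
      _ ≤ dvObjective P Q (truncLlr P Q n) := sub_log_le_dvObjective_truncLlr P Q n
      _ ≤ sSup (dvObjective P Q '' 𝒱) := le_sSup ⟨_, h_bdd _ (measurable_truncLlr P Q n)
          ⟨n, abs_truncLlr_le P Q n⟩, rfl⟩
  have h_log : Tendsto (fun n : ℕ ↦ Real.log (1 + exp (-n))) atTop (𝓝 0) := by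
    have : Tendsto (fun n : ℕ ↦ 1 + exp (-n)) atTop (𝓝 1) := by
      simpa using tendsto_const_nhds.add
        (tendsto_exp_atBot.comp (tendsto_neg_atTop_atBot.comp tendsto_natCast_atTop_atTop))
    simpa [Function.comp_def] using (continuousAt_log one_ne_zero).tendsto.comp this
  have h_lim := EReal.Tendsto.sub_coe (EReal.Tendsto.sub_coe
    ((continuous_coe_ennreal_ereal.tendsto _).comp (tendsto_lintegral_ofReal_min_llr P Q))
    (tendsto_const_nhds (x := N.toReal))) h_log
  rw [relEnt_eq_lintegral_sub_lintegral hPQ, hN]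
  simpa using le_of_tendsto' h_lim h_le

lemma sSup_dvObjective_eq_top_of_not_ac (hPQ : ¬ P ≪ Q)
    (h_bdd : ∀ v : Ω → ℝ, Measurable v → (∃ C, ∀ ω, |v ω| ≤ C) → v ∈ 𝒱) :
    sSup (dvObjective P Q '' 𝒱) = ⊤ := by
  obtain ⟨A, hA, hQA, hPA⟩ : ∃ A, MeasurableSet A ∧ Q A = 0 ∧ P A ≠ 0 := by
    contrapose! hPQ
    exact Measure.AbsolutelyContinuous.mk hPQ
  have hPA' : 0 < P.real A := ENNReal.toReal_pos hPA (measure_ne_top P A)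
  refine EReal.eq_top_iff_forall_lt _ |>.2 fun M ↦ ?_
  set c := (|M| + 1) / P.real A
  have h_mem : A.indicator (fun _ ↦ c) ∈ 𝒱 :=
    h_bdd _ (measurable_const.indicator hA) ⟨|c|, fun ω ↦ by
      by_cases hω : ω ∈ A <;> simp [hω]⟩
  calc (M : EReal) < ((c * P.real A : ℝ) : EReal) := by
        rw [EReal.coe_lt_coe_iff, div_mul_cancel₀ _ hPA'.ne']
        linarith [le_abs_self M]
    _ = dvObjective P Q (A.indicator fun _ ↦ c) :=
        (dvObjective_indicator_of_measure_eq_zero P hA hQA c).symm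
    _ ≤ sSup (dvObjective P Q '' 𝒱) := le_sSup ⟨_, h_mem, rfl⟩

end LowerBound

/-- **Donsker–Varadhan variational formula**. -/
theorem relEnt_eq_sSup_dvObjective (P Q : Measure Ω) [IsProbabilityMeasure P]
    [IsProbabilityMeasure Q] {𝒱 : Set (Ω → ℝ)}
    (h_bdd : ∀ v : Ω → ℝ, Measurable v → (∃ C, ∀ ω, |v ω| ≤ C) → v ∈ 𝒱)
    (h_int : ∀ v ∈ 𝒱, Measurable v ∧ Integrable v P) :
    relEnt P Q = sSup (dvObjective P Q '' 𝒱) := by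
  refine le_antisymm ?_ (sSup_le ?_)
  · by_cases hPQ : P ≪ Q
    · exact relEnt_le_sSup_dvObjective_of_ac hPQ h_bdd
    · rw [sSup_dvObjective_eq_top_of_not_ac hPQ h_bdd]
      exact le_top
  · rintro _ ⟨v, hv, rfl⟩
    exact dvObjective_le_relEnt P Q (h_int v hv).1 (h_int v hv).2

/-- `B_W(Ω)` in the notation of the paper. -/
def weightBounded (W : Ω → ℝ) : AddSubgroup (Ω → ℝ) where
  carrier := {u | Measurable u ∧ ∃ c, ∀ ω, |u ω| ≤ c * (1 + W ω)}
  zero_mem' := ⟨measurable_const, 0, by simp⟩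
  add_mem' := fun ⟨hu, c, hc⟩ ⟨hv, d, hd⟩ ↦ ⟨hu.add hv, c + d, fun ω ↦
    (abs_add_le _ _).trans ((add_le_add (hc ω) (hd ω)).trans_eq (add_mul c d _).symm)⟩
  neg_mem' := fun ⟨hu, c, hc⟩ ↦ ⟨hu.neg, c, fun ω ↦ (abs_neg (_ : ℝ)).trans_le (hc ω)⟩

variable {W : Ω → ℝ}

lemma mem_weightBounded_of_bounded (hW0 : ∀ ω, 0 ≤ W ω) {v : Ω → ℝ} (hv : Measurable v)
    {C : ℝ} (hC : ∀ ω, |v ω| ≤ C) : v ∈ weightBounded W :=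
  ⟨hv, C, fun ω ↦ (hC ω).trans
    (le_mul_of_one_le_right ((abs_nonneg _).trans (hC ω)) (le_add_of_nonneg_right (hW0 ω)))⟩

lemma self_mem_weightBounded (hWm : Measurable W) (hW0 : ∀ ω, 0 ≤ W ω) :
    W ∈ weightBounded W :=
  ⟨hWm, 1, fun ω ↦ by rw [abs_of_nonneg (hW0 ω)]; linarith⟩

lemma integrable_of_mem_weightBounded {P : Measure Ω} [IsFiniteMeasure P]
    (hWP : Integrable W P) {u : Ω → ℝ} (hu : u ∈ weightBounded W) : Integrable u P := by
  obtain ⟨hum, c, hc⟩ := hu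
  exact (((integrable_const 1).add hWP).const_mul c).mono' hum.aestronglyMeasurable
    (ae_of_all _ hc)

lemma isProbabilityMeasure_tiltedPM (R : Measure Ω) (W : Ω → ℝ) (hz0 : zW R W ≠ 0)
    (hzW : zW R W ≠ ⊤) : IsProbabilityMeasure (tiltedPM R W) := by
  constructor
  rw [tiltedPM, Measure.smul_apply, withDensity_apply _ MeasurableSet.univ,
    Measure.restrict_univ, smul_eq_mul]
  exact ENNReal.inv_mul_cancel hz0 hzW

lemma lintegral_ofReal_exp_tiltedPM (R : Measure Ω) (hWm : Measurable W) {v : Ω → ℝ}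
    (hv : Measurable v) :
    ∫⁻ ω, ENNReal.ofReal (exp (v ω)) ∂(tiltedPM R W)
      = (zW R W)⁻¹ * ∫⁻ ω, ENNReal.ofReal (exp (v ω - W ω)) ∂ R := by
  rw [tiltedPM, lintegral_smul_measure, smul_eq_mul, lintegral_withDensity_eq_lintegral_mul _
    (f := fun ω ↦ ENNReal.ofReal (exp (-W ω))) hWm.neg.exp.ennreal_ofReal hv.exp.ennreal_ofReal]
  congr 1
  refine lintegral_congr fun ω ↦ ?_
  rw [Pi.mul_apply, ← ENNReal.ofReal_mul (exp_pos _).le, ← exp_add, neg_add_eq_sub]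

lemma dvObjective_tiltedPM_add {P R : Measure Ω} [IsProbabilityMeasure P] (hWm : Measurable W)
    (hWP : Integrable W P) (hz0 : zW R W ≠ 0) (hzW : zW R W ≠ ⊤) {u : Ω → ℝ}
    (hu : Measurable u) (huP : Integrable u P) :
    dvObjective P (tiltedPM R W) (u + W)
      = dvObjective P R u + ((∫ ω, W ω ∂P + Real.log (zW R W).toReal : ℝ) : EReal) := by
  have : NeZero R := ⟨fun h ↦ hz0 (by simp [zW, h])⟩
  have h_log : ENNReal.log (∫⁻ ω, ENNReal.ofReal (exp (u ω)) ∂ R) ≠ ⊥ := by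
    simpa using lintegral_ofReal_exp_ne_zero hu.aemeasurable
  rw [dvObjective, dvObjective, integral_add' huP hWP,
    lintegral_ofReal_exp_tiltedPM R hWm (hu.add hWm)]
  simp only [Pi.add_apply, add_sub_cancel_right]
  rw [ENNReal.log_mul_add, ENNReal.log_inv, ENNReal.log_pos_real hz0 hzW]
  generalize ENNReal.log (∫⁻ ω, ENNReal.ofReal (exp (u ω)) ∂ R) = L at h_log ⊢
  induction L with
  | bot => exact absurd rfl h_log
  | top => simp
  | coe x => norm_cast; ring

lemma image_dvObjective_tiltedPM {P R : Measure Ω} [IsProbabilityMeasure P]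
    (hWm : Measurable W) (hW0 : ∀ ω, 0 ≤ W ω) (hWP : Integrable W P) (hz0 : zW R W ≠ 0)
    (hzW : zW R W ≠ ⊤) :
    dvObjective P (tiltedPM R W) '' weightBounded W
      = (· + ((∫ ω, W ω ∂P + Real.log (zW R W).toReal : ℝ) : EReal))
          '' (dvObjective P R '' weightBounded W) := by
  have hW := self_mem_weightBounded hWm hW0
  have h_add {u} (hu : u ∈ weightBounded W) := dvObjective_tiltedPM_add hWm hWP hz0 hzW hu.1
    (integrable_of_mem_weightBounded hWP hu)
  rw [Set.image_image]
  ext y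
  constructor
  · rintro ⟨v, hv, rfl⟩
    have hu := sub_mem hv hW
    exact ⟨v - W, hu, (h_add hu).symm.trans (congrArg _ (sub_add_cancel v W))⟩
  · rintro ⟨u, hu, rfl⟩
    exact ⟨u + W, add_mem hu hW, h_add hu⟩

lemma relEntSF_zero_measure (P : Measure Ω) [NeZero P] (W : Ω → ℝ) : relEntSF 0 W P = ⊤ := by
  have h_tilted : tiltedPM 0 W = 0 := by simp [tiltedPM]
  have h_not_ac : ¬ P ≪ tiltedPM 0 W := by
    rw [h_tilted, Measure.absolutelyContinuous_zero_iff]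
    exact NeZero.ne P
  simp [relEntSF, relEnt, h_not_ac]

end MeasureTheory

theorem relEntSF_eq_sSup_BW_general
    {Ω : Type*} [MeasurableSpace Ω] (R : Measure Ω)
    (P : Measure Ω) [IsProbabilityMeasure P]
    (W : Ω → ℝ) (hWm : Measurable W) (hW0 : ∀ ω, 0 ≤ W ω)
    (hzW : zW R W ≠ ⊤) (hWP : Integrable W P) :
    relEntSF R W P =
      sSup { x : EReal | ∃ u : Ω → ℝ, Measurable u ∧
        (∃ c : ℝ, ∀ ω, |u ω| ≤ c * (1 + W ω)) ∧
        x = ((∫ ω, u ω ∂P : ℝ) : EReal)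
              - ENNReal.log (lintegral R (fun ω => ENNReal.ofReal (Real.exp (u ω)))) } := by
  suffices relEntSF R W P = sSup (dvObjective P R '' weightBounded W) by
    rw [this]
    congr 1
    ext x
    exact ⟨fun ⟨u, ⟨hu, hc⟩, hx⟩ ↦ ⟨u, hu, hc, hx.symm⟩,
      fun ⟨u, hu, hc, hx⟩ ↦ ⟨u, ⟨hu, hc⟩, hx.symm⟩⟩
  obtain rfl | hR := eq_or_ne R 0
  · rw [relEntSF_zero_measure, eq_comm, eq_top_iff, ← dvObjective_zero_measure P 0]
    exact le_sSup ⟨0, zero_mem _, rfl⟩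
  have : NeZero R := ⟨hR⟩
  have hz0 : zW R W ≠ 0 := lintegral_ofReal_exp_ne_zero hWm.neg.aemeasurable
  have := isProbabilityMeasure_tiltedPM R W hz0 hzW
  rw [relEntSF, relEnt_eq_sSup_dvObjective P (tiltedPM R W)
      (fun _ hv ⟨_, hC⟩ ↦ mem_weightBounded_of_bounded hW0 hv hC)
      (fun _ hv ↦ ⟨hv.1, integrable_of_mem_weightBounded hWP hv⟩),
    image_dvObjective_tiltedPM hWm hW0 hWP hz0 hzW, EReal.sSup_image_add_coe, EReal.coe_add,
    add_comm ((∫ ω, W ω ∂P : ℝ) : EReal), ← add_assoc, EReal.add_sub_cancel_right,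
    EReal.add_sub_cancel_right]

/-- The variational ("sup") representation of the relative entropy with respect to a
σ-finite measure `R`, over the class `B_W(Ω)` of measurable functions `u` with
`sup |u|/(1+W) < ∞` : `H(P|R) = sup { ∫ u dP - log ∫ e^u dR }`. -/
theorem relEntSF_eq_sSup_BW
    {Ω : Type*} [MeasurableSpace Ω] (R : Measure Ω) [SigmaFinite R]
    (P : Measure Ω) [IsProbabilityMeasure P]
    (W : Ω → ℝ) (hWm : Measurable W) (hW0 : ∀ ω, 0 ≤ W ω)
    (hzW : zW R W ≠ ⊤) (hWP : Integrable W P) :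
    relEntSF R W P =
      sSup { x : EReal | ∃ u : Ω → ℝ, Measurable u ∧
        (∃ c : ℝ, ∀ ω, |u ω| ≤ c * (1 + W ω)) ∧
        x = ((∫ ω, u ω ∂P : ℝ) : EReal)
              - ENNReal.log (lintegral R (fun ω => ENNReal.ofReal (Real.exp (u ω)))) } :=
  relEntSF_eq_sSup_BW_general R P W hWm hW0 hzW hWP
end

section
/- Let R be a Markov measure on the path space Ω = D([0,1],X), let 0 ≤ t ≤ 1, and let α, β : Ω → [0,∞) be nonnegative measurable functions with α measurable with respect to σ(X_{[0,t]}) and β measurable with respect to σ(X_{[t,1]}). Then for R-almost every ω: if E_R(αβ | X_t)(ω) = 0 then E_R(α | X_t)(ω) = 0 or E_R(β | X_t)(ω) = 0; and if E_R(αβ | X_t)(ω) > 0 then E_R(α | X_t)(ω) > 0, E_R(β | X_t)(ω) > 0 and E_R(αβ | X_t)(ω) = E_R(α | X_t)(ω)·E_R(β | X_t)(ω) ∈ (0,∞]. -/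
open MeasureTheory Set

/-- A càdlàg path on `[0,1]`: right-continuous with left limits. -/
def IsCadlag {X : Type*} [TopologicalSpace X] (f : Icc (0:ℝ) 1 → X) : Prop :=
  ∀ t : Icc (0:ℝ) 1, ContinuousWithinAt f (Ici t) t ∧
    ∃ l : X, Filter.Tendsto f (nhdsWithin t (Iio t)) (nhds l)

/-- The path space `D([0,1], X)` of càdlàg paths with values in `X`. -/
def PathSpace (X : Type*) [TopologicalSpace X] : Type _ :=
  {f : Icc (0:ℝ) 1 → X // IsCadlag f}

/-- The canonical process `X_t(ω) = ω_t`. -/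
def canon {X : Type*} [TopologicalSpace X] (t : Icc (0:ℝ) 1) : PathSpace X → X :=
  fun ω => ω.1 t

/-- The σ-field on path space is generated by the canonical process. -/
instance pathSpaceMeasurableSpace (X : Type*) [TopologicalSpace X] [MeasurableSpace X] :
    MeasurableSpace (PathSpace X) :=
  ⨆ t : Icc (0:ℝ) 1, MeasurableSpace.comap (canon t) inferInstance

variable {X : Type*} [TopologicalSpace X] [MeasurableSpace X]

/-- The σ-field `σ(X_t)` generated by the position at time `t`. -/
def mAt (t : Icc (0:ℝ) 1) : MeasurableSpace (PathSpace X) :=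
  MeasurableSpace.comap (canon t) inferInstance

/-- The σ-field `σ(X_{[0,t]})` generated by the past up to time `t`. -/
def mUpTo (t : Icc (0:ℝ) 1) : MeasurableSpace (PathSpace X) :=
  ⨆ s : Icc (0:ℝ) 1, ⨆ _ : s ≤ t, MeasurableSpace.comap (canon s) inferInstance

/-- The σ-field `σ(X_{[t,1]})` generated by the future from time `t` on. -/
def mFrom (t : Icc (0:ℝ) 1) : MeasurableSpace (PathSpace X) :=
  ⨆ s : Icc (0:ℝ) 1, ⨆ _ : t ≤ s, MeasurableSpace.comap (canon s) inferInstance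

/-- The σ-field `σ(X_{[s,t]})` generated by the positions between times `s` and `t`. -/
def mBetween (s t : Icc (0:ℝ) 1) : MeasurableSpace (PathSpace X) :=
  ⨆ u : Icc (0:ℝ) 1, ⨆ _ : s ≤ u ∧ u ≤ t, MeasurableSpace.comap (canon u) inferInstance

/-- `C` is (a version of) the conditional expectation, in `[0,∞]`, of the nonnegative
function `Z` given the sub-σ-field `m`, under the (possibly unbounded) measure `R`:
`C` is `m`-measurable and has the same integral as `Z` on every `m`-measurable set.
For a conditionable path measure this characterizes, up to a.e. equality, the monotone
extension `E_R(Z|m) = lim_n E_R(1_{Ω_1 ∪ … ∪ Ω_n}(Z ∧ n)|m)` of the usual conditional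
expectation along a σ-finite partition `(Ω_k)` of `R`. -/
def IsCondExpNN {Ω : Type*} [MeasurableSpace Ω] (R : Measure Ω) (m : MeasurableSpace Ω)
    (Z C : Ω → ENNReal) : Prop :=
  Measurable[m] C ∧
    ∀ s : Set Ω, MeasurableSet[m] s → ∫⁻ ω in s, C ω ∂ R = ∫⁻ ω in s, Z ω ∂ R

/-- A path measure is conditionable if all its time-marginals are σ-finite. -/
def Conditionable (Q : Measure (PathSpace X)) : Prop :=
  ∀ t : Icc (0:ℝ) 1, SigmaFinite (Q.map (canon t))

/-- A path measure `R` is Markov if it is conditionable and, for every time `t`,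
`R(X_{[t,1]} ∈ · | X_{[0,t]}) = R(X_{[t,1]} ∈ · | X_t)`, i.e. every version of the
conditional expectation given `X_t` of the indicator of a future event is also a version
of its conditional expectation given the whole past `X_{[0,t]}`. -/
def IsMarkovMeasure (R : Measure (PathSpace X)) : Prop :=
  Conditionable R ∧
    ∀ t : Icc (0:ℝ) 1, ∀ B : Set (PathSpace X), MeasurableSet[mFrom t] B →
      ∀ C : PathSpace X → ENNReal,
        IsCondExpNN R (mAt t) (B.indicator fun _ => (1 : ENNReal)) C →
        IsCondExpNN R (mUpTo t) (B.indicator fun _ => (1 : ENNReal)) C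

/-!
Since `R` is Markov, the conditional expectation of the future functional `β` given `X_t` is
also its conditional expectation given the whole past `X_{[0,t]}`: this holds for indicators by
definition and passes to all nonnegative `β` by linearity and monotone convergence. Pulling out
the known factors twice, first `E_R(β | X_t)` given `X_t`, then the past functional `α` given
`X_{[0,t]}`, shows that `E_R(α | X_t) E_R(β | X_t)` is a version of `E_R(αβ | X_t)`, and the
conclusion follows from the a.e. uniqueness of versions.
-/

open scoped ENNReal

namespace MeasureTheory

variable {Ω : Type*} {m m' mF m0 : MeasurableSpace Ω} {P : Measure[m0] Ω} {Z C : Ω → ℝ≥0∞}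

lemma isCondExpNN_condLExp (hm : m ≤ m0) [SigmaFinite (P.trim hm)] (Z : Ω → ℝ≥0∞) :
    IsCondExpNN P m Z (P⁻[Z|m]) :=
  ⟨measurable_condLExp m P Z, fun _ hs => setLIntegral_condLExp hm P Z hs⟩

lemma IsCondExpNN.ae_eq_condLExp (hm : m ≤ m0) [SigmaFinite (P.trim hm)]
    (h : IsCondExpNN P m Z C) : C =ᵐ[P] P⁻[Z|m] :=
  MeasureTheory.ae_eq_condLExp hm P Z h.1 h.2

lemma IsCondExpNN.ae_eq (hm : m ≤ m0) [SigmaFinite (P.trim hm)] {C' : Ω → ℝ≥0∞}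
    (h : IsCondExpNN P m Z C) (h' : IsCondExpNN P m Z C') : C =ᵐ[P] C' :=
  (h.ae_eq_condLExp hm).trans (h'.ae_eq_condLExp hm).symm

lemma IsCondExpNN.trim_withDensity_eq (hm : m ≤ m0) (h : IsCondExpNN P m Z C) :
    (P.withDensity C).trim hm = (P.withDensity Z).trim hm := by
  refine @Measure.ext _ m _ _ fun S hS => ?_
  rw [trim_measurableSet_eq hm hS, trim_measurableSet_eq hm hS,
    withDensity_apply _ (hm S hS), withDensity_apply _ (hm S hS)]
  exact h.2 S hS

lemma IsCondExpNN.mul_left (hm : m ≤ m0) (hZ : Measurable Z) (h : IsCondExpNN P m Z C)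
    {g : Ω → ℝ≥0∞} (hg : Measurable[m] g) :
    IsCondExpNN P m (fun ω => g ω * Z ω) (fun ω => g ω * C ω) := by
  refine ⟨hg.mul h.1, fun S hS => ?_⟩
  have hC : Measurable C := h.1.mono hm le_rfl
  have hgm : Measurable g := hg.mono hm le_rfl
  calc ∫⁻ ω in S, g ω * C ω ∂P = ∫⁻ ω in S, g ω ∂(P.withDensity C).trim hm := by
        rw [setLIntegral_trim hm hg hS,
          setLIntegral_withDensity_eq_setLIntegral_mul P hC hgm (hm S hS)]
        simp only [Pi.mul_apply, mul_comm]
    _ = ∫⁻ ω in S, g ω * Z ω ∂P := by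
        rw [h.trim_withDensity_eq hm, setLIntegral_trim hm hg hS,
          setLIntegral_withDensity_eq_setLIntegral_mul P hZ hgm (hm S hS)]
        simp only [Pi.mul_apply, mul_comm]

lemma IsCondExpNN.mul (hmm' : m ≤ m') (hm' : m' ≤ m0)
    {α β Cα Cβ : Ω → ℝ≥0∞} (hα : Measurable[m'] α) (hβ : Measurable β)
    (hCα : IsCondExpNN P m α Cα) (hCβ : IsCondExpNN P m' β Cβ) (hCβm : Measurable[m] Cβ) :
    IsCondExpNN P m (fun ω => α ω * β ω) (fun ω => Cα ω * Cβ ω) := by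
  refine ⟨hCα.1.mul hCβm, fun S hS => ?_⟩
  calc ∫⁻ ω in S, Cα ω * Cβ ω ∂P = ∫⁻ ω in S, Cβ ω * α ω ∂P := by
        simp only [mul_comm (Cα _)]
        exact (hCα.mul_left (hmm'.trans hm') (hα.mono hm' le_rfl) hCβm).2 S hS
    _ = ∫⁻ ω in S, α ω * β ω ∂P := by
        simp only [mul_comm (Cβ _)]
        exact (hCβ.mul_left hm' hβ hα).2 S (hmm' S hS)

lemma ae_monotone_condLExp {f : ℕ → Ω → ℝ≥0∞} (hf : Monotone f) :
    ∀ᵐ ω ∂P, Monotone fun n => P⁻[f n|m] ω := by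
  filter_upwards [ae_all_iff.2 fun n => condLExp_mono (mΩ := m) (P := P)
    (ae_of_all _ (hf (Nat.le_succ n)))] with ω h using monotone_nat_of_le_succ h

lemma condLExp_iSup_ae_eq (hm : m ≤ m0) [SigmaFinite (P.trim hm)] {f : ℕ → Ω → ℝ≥0∞}
    (hf : ∀ n, Measurable (f n)) (hmono : Monotone f) :
    P⁻[fun ω => ⨆ n, f n ω|m] =ᵐ[P] fun ω => ⨆ n, P⁻[f n|m] ω := by
  refine (ae_eq_condLExp hm P _ (Measurable.iSup fun n => measurable_condLExp m P (f n))
    fun S hS => ?_).symm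
  rw [lintegral_iSup' (fun n => (measurable_condLExp' m P (f n)).aemeasurable)
      (ae_restrict_of_ae (ae_monotone_condLExp hmono)),
    lintegral_iSup hf hmono]
  simp only [setLIntegral_condLExp hm P _ hS]

lemma setLIntegral_condLExp_of_indicator (hm : m ≤ m0) [SigmaFinite (P.trim hm)]
    (hmF : mF ≤ m0) {S : Set Ω}
    (hind : ∀ B, MeasurableSet[mF] B →
      ∫⁻ ω in S, P⁻[B.indicator fun _ => 1|m] ω ∂P = ∫⁻ ω in S, B.indicator (fun _ => 1) ω ∂P)
    {f : Ω → ℝ≥0∞} (hf : Measurable[mF] f) :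
    ∫⁻ ω in S, P⁻[f|m] ω ∂P = ∫⁻ ω in S, f ω ∂P := by
  refine @Measurable.ennreal_induction Ω mF
    (fun f => ∫⁻ ω in S, P⁻[f|m] ω ∂P = ∫⁻ ω in S, f ω ∂P) (fun c B hB => ?_)
    (fun f g _ hf _ hf' hg' => ?_) (fun f hf hmono hf' => ?_) f hf
  · have hB0 : MeasurableSet B := hmF B hB
    have hcB : (B.indicator fun _ => c) = c • B.indicator fun _ => (1 : ℝ≥0∞) := by
      ext ω; by_cases h : ω ∈ B <;> simp [h]
    rw [hcB, lintegral_congr_ae (ae_restrict_of_ae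
        (condLExp_smul _ (measurable_const.indicator hB0).aemeasurable c))]
    simp only [Pi.smul_apply, smul_eq_mul]
    rw [lintegral_const_mul _ (measurable_condLExp' m P _),
      lintegral_const_mul _ (measurable_const.indicator hB0), hind B hB]
  · rw [lintegral_congr_ae
      (ae_restrict_of_ae (condLExp_add_left g (hf.mono hmF le_rfl).aemeasurable))]
    simp only [Pi.add_apply]
    rw [lintegral_add_left (measurable_condLExp' m P f), lintegral_add_left (hf.mono hmF le_rfl),
      hf', hg']
  · have hf0 n : Measurable (f n) := (hf n).mono hmF le_rfl
    rw [lintegral_congr_ae (ae_restrict_of_ae (condLExp_iSup_ae_eq hm hf0 hmono)),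
      lintegral_iSup' (fun n => (measurable_condLExp' m P (f n)).aemeasurable)
        (ae_restrict_of_ae (ae_monotone_condLExp hmono)),
      lintegral_iSup hf0 hmono]
    simp only [hf']

end MeasureTheory

section PathSpace

variable {X : Type*} [TopologicalSpace X] [MeasurableSpace X]

lemma mAt_le (t : Icc (0:ℝ) 1) :
    (mAt t : MeasurableSpace (PathSpace X)) ≤ pathSpaceMeasurableSpace X :=
  le_iSup (fun u : Icc (0:ℝ) 1 => MeasurableSpace.comap (canon (X := X) u) inferInstance) t

lemma mUpTo_le (t : Icc (0:ℝ) 1) :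
    (mUpTo t : MeasurableSpace (PathSpace X)) ≤ pathSpaceMeasurableSpace X :=
  iSup₂_le fun s _ => mAt_le s

lemma mFrom_le (t : Icc (0:ℝ) 1) :
    (mFrom t : MeasurableSpace (PathSpace X)) ≤ pathSpaceMeasurableSpace X :=
  iSup₂_le fun s _ => mAt_le s

lemma mAt_le_mUpTo (t : Icc (0:ℝ) 1) :
    (mAt t : MeasurableSpace (PathSpace X)) ≤ mUpTo t :=
  le_iSup₂ (f := fun (s : Icc (0:ℝ) 1) (_ : s ≤ t) =>
    MeasurableSpace.comap (canon (X := X) s) inferInstance) t le_rfl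

lemma Conditionable.sigmaFinite_trim_mAt {R : Measure (PathSpace X)} (hR : Conditionable R)
    (t : Icc (0:ℝ) 1) : SigmaFinite (R.trim (mAt_le t)) :=
  SigmaFinite.of_map _ (Measurable.of_comap_le le_rfl).aemeasurable
    (by have h := hR t; rwa [← map_trim_comap (Measurable.of_comap_le (mAt_le t))] at h)

lemma IsMarkovMeasure.isCondExpNN_mUpTo {R : Measure (PathSpace X)} (hR : IsMarkovMeasure R)
    {t : Icc (0:ℝ) 1} {β C : PathSpace X → ℝ≥0∞} (hβ : Measurable[mFrom t] β)
    (hC : IsCondExpNN R (mAt t) β C) : IsCondExpNN R (mUpTo t) β C := by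
  have := hR.1.sigmaFinite_trim_mAt t
  refine ⟨hC.1.mono (mAt_le_mUpTo t) le_rfl, fun S hS => ?_⟩
  rw [lintegral_congr_ae (ae_restrict_of_ae (hC.ae_eq_condLExp (mAt_le t)))]
  exact setLIntegral_condLExp_of_indicator (mAt_le t) (mFrom_le t)
    (fun B hB => (hR.2 t B hB _ (isCondExpNN_condLExp (mAt_le t) _)).2 S hS) hβ

end PathSpace

theorem markov_condexp_product_general
    {X : Type*} [TopologicalSpace X] [MeasurableSpace X]
    (R : Measure (PathSpace X)) (hR : IsMarkovMeasure R)
    (t : Icc (0:ℝ) 1) (α β : PathSpace X → ENNReal)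
    (hα : Measurable[mUpTo t] α) (hβ : Measurable[mFrom t] β)
    (Cαβ Cα Cβ : PathSpace X → ENNReal)
    (hαβ : IsCondExpNN R (mAt t) (fun ω => α ω * β ω) Cαβ)
    (hCα : IsCondExpNN R (mAt t) α Cα) (hCβ : IsCondExpNN R (mAt t) β Cβ) :
    ∀ᵐ ω ∂ R,
      (Cαβ ω = 0 → Cα ω = 0 ∨ Cβ ω = 0) ∧
      (0 < Cαβ ω → 0 < Cα ω ∧ 0 < Cβ ω ∧ Cαβ ω = Cα ω * Cβ ω) := by
  have := hR.1.sigmaFinite_trim_mAt t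
  have hprod : IsCondExpNN R (mAt t) (fun ω => α ω * β ω) (fun ω => Cα ω * Cβ ω) :=
    hCα.mul (mAt_le_mUpTo t) (mUpTo_le t) hα (hβ.mono (mFrom_le t) le_rfl)
      (hR.isCondExpNN_mUpTo hβ hCβ) hCβ.1
  filter_upwards [hαβ.ae_eq (mAt_le t) hprod] with ω hω
  rw [hω]
  exact ⟨mul_eq_zero.mp, fun h => ⟨(CanonicallyOrderedAdd.mul_pos.mp h).1,
    (CanonicallyOrderedAdd.mul_pos.mp h).2, rfl⟩⟩

/-- Lemma (Léonard, Lemma 3.1-(a)). Let `R` be a Markov measure, `α` a nonnegative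
`σ(X_{[0,t]})`-measurable function and `β` a nonnegative `σ(X_{[t,1]})`-measurable
function. Then, `R`-almost everywhere: if `E_R(αβ|X_t) = 0` then `E_R(α|X_t) = 0` or
`E_R(β|X_t) = 0`; and if `E_R(αβ|X_t) > 0` then `E_R(α|X_t) > 0`, `E_R(β|X_t) > 0` and
`E_R(αβ|X_t) = E_R(α|X_t)·E_R(β|X_t) ∈ (0,∞]`. -/
theorem markov_condexp_product
    {X : Type*} [TopologicalSpace X] [MeasurableSpace X] [PolishSpace X] [BorelSpace X]
    (R : Measure (PathSpace X)) (hR : IsMarkovMeasure R)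
    (t : Icc (0:ℝ) 1) (α β : PathSpace X → ENNReal)
    (hα : Measurable[mUpTo t] α) (hβ : Measurable[mFrom t] β)
    (hαfin : ∀ ω, α ω ≠ ⊤) (hβfin : ∀ ω, β ω ≠ ⊤)
    (Cαβ Cα Cβ : PathSpace X → ENNReal)
    (hαβ : IsCondExpNN R (mAt t) (fun ω => α ω * β ω) Cαβ)
    (hCα : IsCondExpNN R (mAt t) α Cα) (hCβ : IsCondExpNN R (mAt t) β Cβ) :
    ∀ᵐ ω ∂ R,
      (Cαβ ω = 0 → Cα ω = 0 ∨ Cβ ω = 0) ∧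
      (0 < Cαβ ω → 0 < Cα ω ∧ 0 < Cβ ω ∧ Cαβ ω = Cα ω * Cβ ω) :=
  markov_condexp_product_general R hR t α β hα hβ Cαβ Cα Cβ hαβ hCα hCβ
end

section
/- Let R, P be nonnegative measures on Ω with P bounded and P ≺ R, and let φ : Ω → X be a measurable map with R_φ = φ_*R σ-finite. Then: (1) P_φ ≺ R_φ and (dP_φ/dR_φ)(φ(ω)) = E_R(dP/dR | φ)(ω) for R-almost every ω; (2) for every bounded measurable f, E_P(f | φ)·E_R(dP/dR | φ) = E_R((dP/dR)·f | φ) R-almost everywhere; (3) E_R(dP/dR | φ) > 0 P-almost everywhere. -/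
open MeasureTheory
open scoped ENNReal

/-!
Write `P = R.withDensity θ` and let `m = σ(φ)`. Against `R`, both `(dP_φ/dR_φ) ∘ φ` and `θ`
integrate to `P (φ⁻¹' t)` over every `m`-measurable set `φ⁻¹' t`, which gives (1). For (2),
pulling the `m`-measurable factor `E_P(f|φ)` out of `E_R(E_P(f|φ) θ | φ)` shows that both sides
integrate to `∫_{φ⁻¹' t} f dP` over `φ⁻¹' t`. For (3), the `R`-integral of `θ` over the
`m`-measurable set `{E_R(θ|φ) ≤ 0}` is nonpositive, so this set is `P`-null.
-/

section

variable {α β : Type*} {mα : MeasurableSpace α} {mβ : MeasurableSpace β} {μ ν : Measure α}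

theorem eq_withDensity_of_forall_lintegral_eq_s18 {θ : α → ℝ≥0∞}
    (h : ∀ f : α → ℝ≥0∞, Measurable f → ∫⁻ x, f x ∂ν = ∫⁻ x, f x * θ x ∂μ) :
    ν = μ.withDensity θ := by
  ext s hs
  rw [withDensity_apply _ hs, ← lintegral_indicator_one hs,
    h _ (measurable_one.indicator hs), ← lintegral_indicator hs]
  congr 1 with x
  by_cases hx : x ∈ s <;> simp [hx]

theorem sigmaFinite_trim_comap_s18 {g : α → β} (hg : Measurable g) [hσ : SigmaFinite (μ.map g)] :
    SigmaFinite (μ.trim hg.comap_le) := by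
  rw [← map_trim_comap hg] at hσ
  exact SigmaFinite.of_map _ (measurable_iff_comap_le.mpr le_rfl).aemeasurable hσ

theorem lintegral_eq_lintegral_mul_toNNReal_rnDeriv [SigmaFinite ν]
    [ν.HaveLebesgueDecomposition μ] (hνμ : ν ≪ μ) {f : α → ℝ≥0∞} (hf : Measurable f) :
    ∫⁻ x, f x ∂ν = ∫⁻ x, f x * (ν.rnDeriv μ x).toNNReal ∂μ := by
  rw [← lintegral_rnDeriv_mul hνμ hf.aemeasurable]
  refine lintegral_congr_ae ?_
  filter_upwards [Measure.rnDeriv_lt_top ν μ] with x hx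
  rw [ENNReal.coe_toNNReal hx.ne, mul_comm]

variable {θ : α → ℝ≥0∞} [IsFiniteMeasure (μ.withDensity θ)]

theorem lintegral_ne_top_of_isFiniteMeasure_withDensity : ∫⁻ x, θ x ∂μ ≠ ∞ := by
  simpa [withDensity_apply _ MeasurableSet.univ] using measure_ne_top (μ.withDensity θ) Set.univ

variable (hθ : Measurable θ)
include hθ

theorem ae_lt_top_of_isFiniteMeasure_withDensity_s18 : ∀ᵐ x ∂μ, θ x < ∞ :=
  ae_lt_top hθ lintegral_ne_top_of_isFiniteMeasure_withDensity

theorem integrable_toReal_of_isFiniteMeasure_withDensity_s18 :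
    Integrable (fun x => (θ x).toReal) μ :=
  integrable_toReal_of_lintegral_ne_top hθ.aemeasurable
    lintegral_ne_top_of_isFiniteMeasure_withDensity

theorem setIntegral_withDensity_eq_setIntegral_toReal_mul_s18 (f : α → ℝ) {s : Set α}
    (hs : MeasurableSet s) :
    ∫ x in s, f x ∂μ.withDensity θ = ∫ x in s, (θ x).toReal * f x ∂μ :=
  setIntegral_withDensity_eq_setIntegral_toReal_smul hθ
    (ae_restrict_of_ae (ae_lt_top_of_isFiniteMeasure_withDensity_s18 hθ)) f hs

theorem toReal_rnDeriv_map_withDensity {g : α → β} (hg : Measurable g)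
    [SigmaFinite (μ.map g)] :
    (fun x => (((μ.withDensity θ).map g).rnDeriv (μ.map g) (g x)).toReal)
      =ᵐ[μ] μ[fun x => (θ x).toReal | mβ.comap g] := by
  have : SigmaFinite μ := SigmaFinite.of_map _ hg.aemeasurable ‹_›
  refine (toReal_rnDeriv_map (withDensity_absolutelyContinuous μ θ) hg).trans
    (condExp_congr_ae ?_)
  filter_upwards [Measure.rnDeriv_withDensity μ hθ] with x hx
  rw [hx]

variable {m : MeasurableSpace α} (hm : m ≤ mα) [SigmaFinite (μ.trim hm)]
include hm

theorem condExp_withDensity_mul_condExp_density {f : α → ℝ}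
    (hf : Integrable f (μ.withDensity θ)) :
    (fun x => (μ.withDensity θ)[f | m] x * μ[fun x => (θ x).toReal | m] x)
      =ᵐ[μ] μ[fun x => (θ x).toReal * f x | m] := by
  set g := (μ.withDensity θ)[f | m]
  have hθlt := ae_lt_top_of_isFiniteMeasure_withDensity_s18 (μ := μ) hθ
  have hθf : Integrable (fun x => (θ x).toReal * f x) μ := by
    simpa only [mul_comm] using (integrable_withDensity_iff hθ hθlt).1 hf
  have hgθ : Integrable (fun x => g x * (θ x).toReal) μ :=
    (integrable_withDensity_iff hθ hθlt).1 (integrable_condExp (μ := μ.withDensity θ))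
  have hpull : μ[fun x => g x * (θ x).toReal | m]
      =ᵐ[μ] fun x => g x * μ[fun x => (θ x).toReal | m] x :=
    condExp_mul_of_stronglyMeasurable_left stronglyMeasurable_condExp hgθ
      (integrable_toReal_of_isFiniteMeasure_withDensity_s18 hθ)
  refine ae_eq_condExp_of_forall_setIntegral_eq hm hθf
    (fun s _ _ => (integrable_condExp.congr hpull).integrableOn) (fun s hs _ => ?_)
    (stronglyMeasurable_condExp.mul stronglyMeasurable_condExp).aestronglyMeasurable
  calc ∫ x in s, g x * μ[fun x => (θ x).toReal | m] x ∂μ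
      = ∫ x in s, g x * (θ x).toReal ∂μ :=
        (integral_congr_ae (ae_restrict_of_ae hpull)).symm.trans (setIntegral_condExp hm hgθ hs)
    _ = ∫ x in s, g x ∂μ.withDensity θ := by
        rw [setIntegral_withDensity_eq_setIntegral_toReal_mul_s18 hθ _ (hm s hs)]
        simp_rw [mul_comm]
    _ = ∫ x in s, f x ∂μ.withDensity θ := setIntegral_condExp hm hf hs
    _ = ∫ x in s, (θ x).toReal * f x ∂μ :=
        setIntegral_withDensity_eq_setIntegral_toReal_mul_s18 hθ _ (hm s hs)

theorem ae_withDensity_condExp_density_pos :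
    ∀ᵐ x ∂μ.withDensity θ, 0 < μ[fun x => (θ x).toReal | m] x := by
  set h := μ[fun x => (θ x).toReal | m]
  have hN : MeasurableSet[m] {x | h x ≤ 0} :=
    measurableSet_le stronglyMeasurable_condExp.measurable measurable_const
  have hnull : (μ.withDensity θ).real {x | h x ≤ 0} ≤ 0 :=
    calc (μ.withDensity θ).real {x | h x ≤ 0}
        = ∫ x in {x | h x ≤ 0}, (θ x).toReal ∂μ := by
          simpa using setIntegral_withDensity_eq_setIntegral_toReal_mul_s18 hθ (fun _ => 1) (hm _ hN)
      _ = ∫ x in {x | h x ≤ 0}, h x ∂μ :=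
          (setIntegral_condExp hm (integrable_toReal_of_isFiniteMeasure_withDensity_s18 hθ) hN).symm
      _ ≤ 0 := setIntegral_nonpos (hm _ hN) fun _ hx => hx
  rw [ae_iff]
  simpa [not_lt, h] using ((measureReal_eq_zero_iff).1 (le_antisymm hnull measureReal_nonneg))

end

theorem pushforward_density_condexp_of_finite_general
    {Ω X : Type*} [MeasurableSpace Ω] [MeasurableSpace X]
    (R P : Measure Ω) [IsFiniteMeasure P] (φ : Ω → X) (hφ : Measurable φ)
    [SigmaFinite (R.map φ)]
    (θ : Ω → ENNReal) (hθm : Measurable θ)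
    (hθ : ∀ f : Ω → ENNReal, Measurable f → ∫⁻ ω, f ω ∂P = ∫⁻ ω, f ω * θ ω ∂ R) :
    (∃ θφ : X → ENNReal, Measurable θφ ∧ (∀ x, θφ x ≠ ⊤) ∧
      (∀ g : X → ENNReal, Measurable g →
        ∫⁻ x, g x ∂(P.map φ) = ∫⁻ x, g x * θφ x ∂(R.map φ)) ∧
      (fun ω => (θφ (φ ω)).toReal)
        =ᵐ[R] R[fun ω => (θ ω).toReal | MeasurableSpace.comap φ inferInstance]) ∧
    (∀ f : Ω → ℝ, Measurable f → (∃ C : ℝ, ∀ ω, |f ω| ≤ C) →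
      (fun ω => (P[f | MeasurableSpace.comap φ inferInstance]) ω *
          (R[fun ω' => (θ ω').toReal | MeasurableSpace.comap φ inferInstance]) ω)
        =ᵐ[R] R[fun ω' => (θ ω').toReal * f ω' | MeasurableSpace.comap φ inferInstance]) ∧
    (∀ᵐ ω ∂P,
      0 < (R[fun ω' => (θ ω').toReal | MeasurableSpace.comap φ inferInstance]) ω) := by
  obtain rfl := eq_withDensity_of_forall_lintegral_eq_s18 hθ
  have := sigmaFinite_trim_comap_s18 (μ := R) hφ
  set θφ : X → ℝ≥0∞ := fun x => (((R.withDensity θ).map φ).rnDeriv (R.map φ) x).toNNReal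
  refine ⟨⟨θφ, by fun_prop, fun _ => ENNReal.coe_ne_top, fun g hg => ?_, ?_⟩,
    fun f hf ⟨C, hC⟩ => ?_, ?_⟩
  · exact lintegral_eq_lintegral_mul_toNNReal_rnDeriv
      ((withDensity_absolutelyContinuous R θ).map hφ) hg
  · exact toReal_rnDeriv_map_withDensity hθm hφ
  · exact condExp_withDensity_mul_condExp_density hθm hφ.comap_le
      (.of_bound hf.aestronglyMeasurable C (.of_forall hC))
  · exact ae_withDensity_condExp_density_pos hθm hφ.comap_le

/-- Proposition (Léonard, Prop A.12). Let `P` be a bounded measure with `P ≺ R`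
(density `θ = dP/dR`) and `φ : Ω → X` measurable with `R_φ` σ-finite. Then:
(1) `P_φ ≺ R_φ` and `(dP_φ/dR_φ) ∘ φ = E_R(dP/dR | φ)` R-a.e.;
(2) for every bounded measurable `f`,
`E_P(f|φ)·E_R(dP/dR|φ) = E_R((dP/dR)·f | φ)` R-a.e.;
(3) `E_R(dP/dR | φ) > 0` P-a.e. -/
theorem pushforward_density_condexp_of_finite
    {Ω X : Type*} [MeasurableSpace Ω] [MeasurableSpace X]
    (R P : Measure Ω) [IsFiniteMeasure P] (φ : Ω → X) (hφ : Measurable φ)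
    [SigmaFinite (R.map φ)]
    (θ : Ω → ENNReal) (hθm : Measurable θ) (hθfin : ∀ ω, θ ω ≠ ⊤)
    (hθ : ∀ f : Ω → ENNReal, Measurable f → ∫⁻ ω, f ω ∂P = ∫⁻ ω, f ω * θ ω ∂ R) :
    (∃ θφ : X → ENNReal, Measurable θφ ∧ (∀ x, θφ x ≠ ⊤) ∧
      (∀ g : X → ENNReal, Measurable g →
        ∫⁻ x, g x ∂(P.map φ) = ∫⁻ x, g x * θφ x ∂(R.map φ)) ∧
      (fun ω => (θφ (φ ω)).toReal)
        =ᵐ[R] R[fun ω => (θ ω).toReal | MeasurableSpace.comap φ inferInstance]) ∧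
    (∀ f : Ω → ℝ, Measurable f → (∃ C : ℝ, ∀ ω, |f ω| ≤ C) →
      (fun ω => (P[f | MeasurableSpace.comap φ inferInstance]) ω *
          (R[fun ω' => (θ ω').toReal | MeasurableSpace.comap φ inferInstance]) ω)
        =ᵐ[R] R[fun ω' => (θ ω').toReal * f ω' | MeasurableSpace.comap φ inferInstance]) ∧
    (∀ᵐ ω ∂P,
      0 < (R[fun ω' => (θ ω').toReal | MeasurableSpace.comap φ inferInstance]) ω) :=
  pushforward_density_condexp_of_finite_general R P φ hφ θ hθm hθ
end
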